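/- arXiv:1701.04963 — 2 statements merged into one kernel-verified Lean document; each statement's English description precedes it below -/
import Mathlib

section
/- For a partition λ, the product of the opposite hook lengths over all cells equals the product of the hook lengths over all cells if and only if λ is a rectangle (all nonzero parts equal). -/
/-- The cells of a partition `p` (parts `p 0 ≥ p 1 ≥ ⋯`), in 0-indexed
coordinates `(a, b)` (column `a`, row `b`), all of which lie in `range n × range n`
when `p` is a partition of `n`. -/
def cells (p : ℕ → ℕ) (n : ℕ) : Finset (ℕ × ℕ) :=
  (Finset.range n ×ˢ Finset.range n).filter fun c => c.1 < p c.2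

/-- The conjugate partition: `conjP p n a` is the number of rows `b < n` with `a < p b`. -/
def conjP (p : ℕ → ℕ) (n : ℕ) (a : ℕ) : ℕ :=
  ((Finset.range n).filter fun b => a < p b).card

/-- The hook length of a cell `c = (a,b)`: `(λ_b - a) + (λ'_a - b) - 1` in 0-indexed
coordinates (which is `(λ_b - a) + (λ'_a - b) + 1` in the 1-indexed convention). -/
def hookLen (p : ℕ → ℕ) (n : ℕ) (c : ℕ × ℕ) : ℕ :=
  (p c.2 - c.1) + (conjP p n c.1 - c.2) - 1

/-- The opposite hook length of a 0-indexed cell `(a,b)` is `a + b + 1`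
(that is, `a + b - 1` in the 1-indexed convention). -/
def hookOp (c : ℕ × ℕ) : ℕ := c.1 + c.2 + 1

/-- `p` is a partition of `n`: weakly decreasing, at most `n` parts, total size `n`. -/
def IsPartitionOf (n : ℕ) (p : ℕ → ℕ) : Prop :=
  Antitone p ∧ p n = 0 ∧ ∑ i ∈ Finset.range n, p i = n

lemma prod_eq_iff_of_le {ι : Type*} {s : Finset ι} {f g : ι → ℕ}
    (hle : ∀ i ∈ s, f i ≤ g i) (hpos : ∀ i ∈ s, 0 < f i) :
    ((∏ i ∈ s, f i) = ∏ i ∈ s, g i) ↔ ∀ i ∈ s, f i = g i := by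
  classical
  induction s using Finset.cons_induction with
  | empty => simp
  | cons a s ha ih =>
    rw [Finset.prod_cons, Finset.prod_cons]
    have hle' : ∀ i ∈ s, f i ≤ g i := fun i hi => hle i (Finset.mem_cons_of_mem hi)
    have hpos' : ∀ i ∈ s, 0 < f i := fun i hi => hpos i (Finset.mem_cons_of_mem hi)
    have hfa : 0 < f a := hpos a (Finset.mem_cons_self a s)
    have hga : f a ≤ g a := hle a (Finset.mem_cons_self a s)
    have hPle : (∏ i ∈ s, f i) ≤ ∏ i ∈ s, g i :=
      Finset.prod_le_prod (fun i _ => Nat.zero_le _) hle'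
    have hPf : 0 < ∏ i ∈ s, f i := Finset.prod_pos hpos'
    constructor
    · intro h
      have h1 : f a * ∏ i ∈ s, f i ≤ g a * ∏ i ∈ s, f i :=
        Nat.mul_le_mul_right _ hga
      have h2 : g a * ∏ i ∈ s, f i ≤ g a * ∏ i ∈ s, g i :=
        Nat.mul_le_mul_left _ hPle
      have e1 : f a * ∏ i ∈ s, f i = g a * ∏ i ∈ s, f i := by omega
      have e2 : g a * ∏ i ∈ s, f i = g a * ∏ i ∈ s, g i := by omega
      have hfg : f a = g a := Nat.eq_of_mul_eq_mul_right hPf e1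
      have hPeq : (∏ i ∈ s, f i) = ∏ i ∈ s, g i :=
        Nat.eq_of_mul_eq_mul_left (by omega) e2
      intro i hi
      rcases Finset.mem_cons.mp hi with rfl | hi'
      · exact hfg
      · exact (ih hle' hpos').mp hPeq i hi'
    · intro h
      rw [h a (Finset.mem_cons_self a s),
        Finset.prod_congr rfl fun i hi => h i (Finset.mem_cons_of_mem hi)]
lemma col (t : ℕ) (ht : 0 < t) :
    ∀ (r : ℕ) (g : ℕ → ℕ), (∀ b < r, t ≤ g b) →
      t * ∏ b ∈ Finset.range r, (g b + (r - b)) ≤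
        (t + r) * ∏ b ∈ Finset.range r, (g b + (r - (b+1))) ∧
      (t * ∏ b ∈ Finset.range r, (g b + (r - b)) =
        (t + r) * ∏ b ∈ Finset.range r, (g b + (r - (b+1))) ↔ ∀ b < r, g b = t) := by
  intro r
  induction r with
  | zero => intro g hg; simp
  | succ r ih =>
    intro g hg
    have hg' : ∀ b < r, t ≤ g (b + 1) := fun b hb => hg (b + 1) (by omega)
    obtain ⟨ih1, ih2⟩ := ih (fun b => g (b + 1)) hg'
    have hg0 : t ≤ g 0 := hg 0 (by omega)
    set A := ∏ b ∈ Finset.range r, (g (b + 1) + (r - b)) with hA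
    set B := ∏ b ∈ Finset.range r, (g (b + 1) + (r - (b + 1))) with hB
    have hBpos : 0 < B := by
      apply Finset.prod_pos; intro b hb
      have := hg' b (Finset.mem_range.mp hb); omega
    have e1 : ∏ b ∈ Finset.range (r + 1), (g b + (r + 1 - b)) = A * (g 0 + r + 1) := by
      rw [Finset.prod_range_succ',
        show g 0 + (r + 1 - 0) = g 0 + r + 1 from by omega]
      exact congrArg (· * (g 0 + r + 1)) (Finset.prod_congr rfl fun b hb => by
        have := Finset.mem_range.mp hb; congr 1; omega)
    have e2 : ∏ b ∈ Finset.range (r + 1), (g b + (r + 1 - (b + 1))) = B * (g 0 + r) := by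
      rw [Finset.prod_range_succ',
        show g 0 + (r + 1 - (0 + 1)) = g 0 + r from by omega]
      exact congrArg (· * (g 0 + r)) (Finset.prod_congr rfl fun b hb => by
        have := Finset.mem_range.mp hb; congr 1; omega)
    rw [e1, e2]
    have key : (t + r) * (g 0 + r + 1) ≤ (t + r + 1) * (g 0 + r) := by nlinarith
    have step2 : (t * A) * (g 0 + r + 1) ≤ ((t + r) * B) * (g 0 + r + 1) :=
      Nat.mul_le_mul_right _ ih1
    have step3 : ((t + r) * B) * (g 0 + r + 1) ≤ (t + r + 1) * (B * (g 0 + r)) := by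
      calc ((t + r) * B) * (g 0 + r + 1) = ((t + r) * (g 0 + r + 1)) * B := by ring
        _ ≤ ((t + r + 1) * (g 0 + r)) * B := Nat.mul_le_mul_right _ key
        _ = (t + r + 1) * (B * (g 0 + r)) := by ring
    have mainle : t * (A * (g 0 + r + 1)) ≤ (t + r + 1) * (B * (g 0 + r)) := by
      calc t * (A * (g 0 + r + 1)) = (t * A) * (g 0 + r + 1) := by ring
        _ ≤ ((t + r) * B) * (g 0 + r + 1) := step2
        _ ≤ (t + r + 1) * (B * (g 0 + r)) := step3
    refine ⟨mainle, ?_, ?_⟩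
    · intro heq
      have e3 : (t * A) * (g 0 + r + 1) = (t + r + 1) * (B * (g 0 + r)) := by
        rw [mul_assoc]; exact heq
      have h2 : (t * A) * (g 0 + r + 1) = ((t + r) * B) * (g 0 + r + 1) :=
        Nat.le_antisymm step2 (by rw [← e3] at step3; exact step3)
      have hia : t * A = (t + r) * B := Nat.eq_of_mul_eq_mul_right (by omega) h2
      have hrest := ih2.mp hia
      have hg0eq : g 0 = t := by
        have h4 : ((t + r) * (g 0 + r + 1)) * B = ((t + r + 1) * (g 0 + r)) * B := by
          calc ((t + r) * (g 0 + r + 1)) * B = ((t + r) * B) * (g 0 + r + 1) := by ring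
            _ = (t * A) * (g 0 + r + 1) := h2.symm
            _ = (t + r + 1) * (B * (g 0 + r)) := e3
            _ = ((t + r + 1) * (g 0 + r)) * B := by ring
        have h5 : (t + r) * (g 0 + r + 1) = (t + r + 1) * (g 0 + r) :=
          Nat.eq_of_mul_eq_mul_right hBpos h4
        zify at h5 ⊢
        linarith
      intro b hb
      rcases Nat.eq_zero_or_pos b with rfl | hbpos
      · exact hg0eq
      · obtain ⟨b', rfl⟩ : ∃ b', b = b' + 1 := ⟨b - 1, by omega⟩
        exact hrest b' (by omega)
    · intro hall
      have hg0eq : g 0 = t := hall 0 (by omega)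
      have hia : t * A = (t + r) * B := ih2.mpr fun b hb => hall (b + 1) (by omega)
      calc t * (A * (g 0 + r + 1)) = (t * A) * (g 0 + r + 1) := by ring
        _ = ((t + r) * B) * (g 0 + r + 1) := by rw [hia]
        _ = (t + r + 1) * (B * (g 0 + r)) := by rw [hg0eq]; ring
lemma conjP_succ_of_lt (p : ℕ → ℕ) {L a : ℕ} (ha : a < p L) :
    conjP p (L + 1) a = conjP p L a + 1 := by
  classical
  unfold conjP
  rw [Finset.range_add_one, Finset.filter_insert, if_pos ha,
    Finset.card_insert_of_notMem (by simp)]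

lemma conjP_succ_of_ge (p : ℕ → ℕ) {L a : ℕ} (ha : p L ≤ a) :
    conjP p (L + 1) a = conjP p L a := by
  classical
  unfold conjP
  rw [Finset.range_add_one, Finset.filter_insert, if_neg (by omega)]

lemma conjP_full (p : ℕ → ℕ) (hp : Antitone p) {L a : ℕ} (ha : a < p L) :
    conjP p L a = L := by
  classical
  unfold conjP
  rw [Finset.filter_true_of_mem, Finset.card_range]
  intro b hb
  exact lt_of_lt_of_le ha (hp (le_of_lt (Finset.mem_range.mp hb)))

lemma conjP_ge (p : ℕ → ℕ) (hp : Antitone p) {n a b : ℕ} (hb : b < n) (ha : a < p b) :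
    b + 1 ≤ conjP p n a := by
  classical
  have hsub : Finset.range (b + 1) ⊆ (Finset.range n).filter fun b' => a < p b' := by
    intro b' hb'
    have hb'' := Finset.mem_range.mp hb'
    refine Finset.mem_filter.mpr ⟨Finset.mem_range.mpr (by omega), ?_⟩
    exact lt_of_lt_of_le ha (hp (by omega))
  simpa [conjP] using Finset.card_le_card hsub

def hkl (p : ℕ → ℕ) (L a b : ℕ) : ℕ := (p b - a) + (conjP p L a - b) - 1

def OP (p : ℕ → ℕ) (ℓ : ℕ) : ℕ :=
  ∏ b ∈ Finset.range ℓ, ∏ a ∈ Finset.range (p b), (a + b + 1)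

def HK (p : ℕ → ℕ) (ℓ : ℕ) : ℕ :=
  ∏ b ∈ Finset.range ℓ, ∏ a ∈ Finset.range (p b), hkl p ℓ a b

lemma hkl_pos (p : ℕ → ℕ) (hp : Antitone p) {ℓ a b : ℕ} (hb : b < ℓ) (ha : a < p b) :
    0 < hkl p ℓ a b := by
  have := conjP_ge p hp hb ha
  unfold hkl
  omega

lemma aux (ℓ : ℕ) : ∀ (p : ℕ → ℕ), Antitone p →
    HK p ℓ ≤ OP p ℓ ∧
    (HK p ℓ = OP p ℓ ↔ ∀ b < ℓ, ∀ b' < ℓ, p b ≠ 0 → p b' ≠ 0 → p b = p b') := by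
  induction ℓ with
  | zero =>
    intro p hp
    constructor
    · simp [HK, OP]
    · simp [HK, OP]
  | succ L ih =>
    intro p hp
    obtain ⟨ih1, ih2⟩ := ih p hp
    by_cases hm : p L = 0
    · -- degenerate: last row empty
      have hconj : ∀ a, conjP p (L + 1) a = conjP p L a := fun a =>
        conjP_succ_of_ge p (by omega)
      have hOP : OP p (L + 1) = OP p L := by
        unfold OP
        rw [Finset.prod_range_succ, hm]
        simp
      have hHK : HK p (L + 1) = HK p L := by
        unfold HK
        rw [Finset.prod_range_succ, hm]
        simp only [Finset.range_zero, Finset.prod_empty, mul_one]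
        exact Finset.prod_congr rfl fun b _ => Finset.prod_congr rfl fun a _ => by
          unfold hkl; rw [hconj]
      rw [hOP, hHK]
      refine ⟨ih1, ih2.trans ⟨?_, ?_⟩⟩
      · intro h b hb b' hb' h1 h2
        have hbL : b < L := by
          rcases Nat.lt_succ_iff_lt_or_eq.mp hb with h' | h'
          · exact h'
          · exact absurd (h' ▸ hm) h1
        have hbL' : b' < L := by
          rcases Nat.lt_succ_iff_lt_or_eq.mp hb' with h' | h'
          · exact h'
          · exact absurd (h' ▸ hm) h2
        exact h b hbL b' hbL' h1 h2
      · intro h b hb b' hb' h1 h2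
        exact h b (by omega) b' (by omega) h1 h2
    · -- main case: p L ≠ 0
      have hmpos : 0 < p L := Nat.pos_of_ne_zero hm
      have hpb : ∀ b < L, p L ≤ p b := fun b hb => hp hb.le
      have hconj1 : ∀ a < p L, conjP p (L + 1) a = L + 1 := fun a ha => by
        rw [conjP_succ_of_lt p ha, conjP_full p hp ha]
      set F := ∏ a ∈ Finset.range (p L), (p L - a) with hF
      set X1 := ∏ b ∈ Finset.range L, ∏ a ∈ Finset.range (p L), (hkl p L a b + 1) with hX1
      set X0 := ∏ b ∈ Finset.range L, ∏ a ∈ Finset.range (p L), hkl p L a b with hX0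
      set Y := ∏ b ∈ Finset.range L, ∏ a ∈ Finset.Ico (p L) (p b), hkl p L a b with hY
      set P := ∏ a ∈ Finset.range (p L), (a + L + 1) with hP
      -- decompositions
      have hOP1 : OP p (L + 1) = OP p L * P := by
        unfold OP
        rw [Finset.prod_range_succ]
      have hlast : (∏ a ∈ Finset.range (p L), hkl p (L + 1) a L) = F := by
        refine Finset.prod_congr rfl fun a ha => ?_
        have ha' := Finset.mem_range.mp ha
        unfold hkl
        rw [hconj1 a ha']
        omega
      have hrowsplit : ∀ b < L, (∏ a ∈ Finset.range (p b), hkl p (L + 1) a b) =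
          (∏ a ∈ Finset.range (p L), (hkl p L a b + 1)) *
            (∏ a ∈ Finset.Ico (p L) (p b), hkl p L a b) := by
        intro b hb
        rw [Finset.range_eq_Ico,
          ← Finset.prod_Ico_consecutive _ (Nat.zero_le (p L)) (hpb b hb),
          ← Finset.range_eq_Ico]
        congr 1
        · refine Finset.prod_congr rfl fun a ha => ?_
          have ha' := Finset.mem_range.mp ha
          have hab : a < p b := lt_of_lt_of_le ha' (hpb b hb)
          unfold hkl
          rw [hconj1 a ha', conjP_full p hp ha']
          omega
        · refine Finset.prod_congr rfl fun a ha => ?_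
          have ha' := (Finset.mem_Ico.mp ha).1
          unfold hkl
          rw [conjP_succ_of_ge p ha']
      have hHK1 : HK p (L + 1) = F * (X1 * Y) := by
        unfold HK
        rw [Finset.prod_range_succ, hlast,
          Finset.prod_congr rfl fun b hb => hrowsplit b (Finset.mem_range.mp hb),
          Finset.prod_mul_distrib]
        ring
      have hHK0 : HK p L = X0 * Y := by
        unfold HK
        rw [show (∏ b ∈ Finset.range L, ∏ a ∈ Finset.range (p b), hkl p L a b)
            = ∏ b ∈ Finset.range L, ((∏ a ∈ Finset.range (p L), hkl p L a b) *
              (∏ a ∈ Finset.Ico (p L) (p b), hkl p L a b)) from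
          Finset.prod_congr rfl fun b hb => by
            rw [Finset.range_eq_Ico,
              ← Finset.prod_Ico_consecutive _ (Nat.zero_le (p L)) (hpb b (Finset.mem_range.mp hb)),
              ← Finset.range_eq_Ico], Finset.prod_mul_distrib]
      -- the column inequality, per column a < p L
      have hcol : ∀ a ∈ Finset.range (p L),
          ((p L - a) * ∏ b ∈ Finset.range L, (hkl p L a b + 1) ≤
            ((p L - a) + L) * ∏ b ∈ Finset.range L, hkl p L a b) ∧
          ((p L - a) * ∏ b ∈ Finset.range L, (hkl p L a b + 1) =
            ((p L - a) + L) * ∏ b ∈ Finset.range L, hkl p L a b ↔ ∀ b < L, p b = p L) := by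
        intro a ha
        have ha' := Finset.mem_range.mp ha
        obtain ⟨c1, c2⟩ := col (p L - a) (by omega) L (fun b => p b - a)
          (fun b hb => Nat.sub_le_sub_right (hpb b hb) a)
        have m1 : (∏ b ∈ Finset.range L, (p b - a + (L - b)))
            = ∏ b ∈ Finset.range L, (hkl p L a b + 1) := by
          refine Finset.prod_congr rfl fun b hb => ?_
          have hb' := Finset.mem_range.mp hb
          have hab : a < p b := lt_of_lt_of_le ha' (hpb b hb')
          unfold hkl
          rw [conjP_full p hp ha']
          omega
        have m0 : (∏ b ∈ Finset.range L, (p b - a + (L - (b + 1))))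
            = ∏ b ∈ Finset.range L, hkl p L a b := by
          refine Finset.prod_congr rfl fun b hb => ?_
          have hb' := Finset.mem_range.mp hb
          have hab : a < p b := lt_of_lt_of_le ha' (hpb b hb')
          unfold hkl
          rw [conjP_full p hp ha']
          omega
        rw [m1, m0] at c1 c2
        refine ⟨c1, c2.trans ⟨?_, ?_⟩⟩
        · intro h b hb
          have h1 := h b hb
          have h2 := hpb b hb
          omega
        · intro h b hb
          have := h b hb
          omega
      -- multiply over all columns
      have hLfpos : ∀ a ∈ Finset.range (p L),
          0 < (p L - a) * ∏ b ∈ Finset.range L, (hkl p L a b + 1) := by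
        intro a ha
        have ha' := Finset.mem_range.mp ha
        exact Nat.mul_pos (by omega) (Finset.prod_pos fun b _ => by omega)
      have hprodle : (∏ a ∈ Finset.range (p L),
            ((p L - a) * ∏ b ∈ Finset.range L, (hkl p L a b + 1)))
          ≤ ∏ a ∈ Finset.range (p L),
            (((p L - a) + L) * ∏ b ∈ Finset.range L, hkl p L a b) :=
        Finset.prod_le_prod (fun a _ => Nat.zero_le _) (fun a ha => (hcol a ha).1)
      have hprodiff := prod_eq_iff_of_le (fun a ha => (hcol a ha).1) hLfpos
      have hLprod : (∏ a ∈ Finset.range (p L),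
          ((p L - a) * ∏ b ∈ Finset.range L, (hkl p L a b + 1))) = F * X1 := by
        rw [Finset.prod_mul_distrib]
        congr 1
        exact Finset.prod_comm
      have hRprod : (∏ a ∈ Finset.range (p L),
          (((p L - a) + L) * ∏ b ∈ Finset.range L, hkl p L a b)) = P * X0 := by
        rw [Finset.prod_mul_distrib]
        congr 1
        · rw [hP, ← Finset.prod_range_reflect (fun a => a + L + 1) (p L)]
          refine Finset.prod_congr rfl fun a ha => ?_
          have := Finset.mem_range.mp ha
          omega
        · exact Finset.prod_comm
      have key : F * X1 ≤ P * X0 := by rw [← hLprod, ← hRprod]; exact hprodle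
      have keyiff : (F * X1 = P * X0) ↔ ∀ b < L, p b = p L := by
        rw [← hLprod, ← hRprod, hprodiff]
        constructor
        · intro h b hb
          exact ((hcol 0 (Finset.mem_range.mpr hmpos)).2.mp
            (h 0 (Finset.mem_range.mpr hmpos))) b hb
        · intro h a ha
          exact (hcol a ha).2.mpr h
      -- positivity
      have hYpos : 0 < Y := by
        rw [hY]
        refine Finset.prod_pos fun b hb => Finset.prod_pos fun a ha => ?_
        exact hkl_pos p hp (Finset.mem_range.mp hb) (Finset.mem_Ico.mp ha).2
      have hPpos : 0 < P := by
        rw [hP]; exact Finset.prod_pos fun a _ => by omega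
      -- final
      have hle : HK p (L + 1) ≤ OP p (L + 1) := by
        rw [hHK1, hOP1]
        calc F * (X1 * Y) = (F * X1) * Y := by ring
          _ ≤ (P * X0) * Y := Nat.mul_le_mul_right _ key
          _ = P * (X0 * Y) := by ring
          _ = P * HK p L := by rw [hHK0]
          _ ≤ P * OP p L := Nat.mul_le_mul_left _ ih1
          _ = OP p L * P := mul_comm _ _
      refine ⟨hle, ?_, ?_⟩
      · intro heq
        have E1 : (F * X1) * Y = P * OP p L := by
          rw [mul_assoc]
          rw [hHK1, hOP1] at heq
          rw [heq]
          ring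
        have c2 : P * HK p L ≤ P * OP p L := Nat.mul_le_mul_left _ ih1
        have q1 : (F * X1) * Y = (P * X0) * Y := by
          refine Nat.le_antisymm (Nat.mul_le_mul_right _ key) ?_
          calc (P * X0) * Y = P * (X0 * Y) := by ring
            _ = P * HK p L := by rw [hHK0]
            _ ≤ P * OP p L := c2
            _ = (F * X1) * Y := E1.symm
        have e1 : F * X1 = P * X0 := Nat.eq_of_mul_eq_mul_right hYpos q1
        have q2 : P * HK p L = P * OP p L := by
          calc P * HK p L = P * (X0 * Y) := by rw [hHK0]
            _ = (P * X0) * Y := by ring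
            _ = (F * X1) * Y := q1.symm
            _ = P * OP p L := E1
        have e2 : HK p L = OP p L := Nat.eq_of_mul_eq_mul_left hPpos q2
        have rectbot := keyiff.mp e1
        have hall : ∀ b < L + 1, p b ≠ 0 → p b = p L := by
          intro b hb _
          rcases Nat.lt_succ_iff_lt_or_eq.mp hb with h' | h'
          · exact rectbot b h'
          · rw [h']
        intro b hb b' hb' h1 h2
        rw [hall b hb h1, hall b' hb' h2]
      · intro hrect
        have rectbot : ∀ b < L, p b = p L := fun b hb =>
          hrect b (by omega) L (by omega) (by have := hpb b hb; omega) hm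
        have e1 : F * X1 = P * X0 := keyiff.mpr rectbot
        have e2 : HK p L = OP p L := ih2.mpr fun b hb b' hb' h1 h2 =>
          hrect b (by omega) b' (by omega) h1 h2
        rw [hHK1, hOP1]
        calc F * (X1 * Y) = (F * X1) * Y := by ring
          _ = (P * X0) * Y := by rw [e1]
          _ = P * (X0 * Y) := by ring
          _ = P * HK p L := by rw [hHK0]
          _ = P * OP p L := by rw [e2]
          _ = OP p L * P := mul_comm _ _
lemma prod_cells (p : ℕ → ℕ) (n : ℕ) (hb : ∀ b < n, p b ≤ n) (f : ℕ × ℕ → ℕ) :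
    ∏ c ∈ cells p n, f c = ∏ b ∈ Finset.range n, ∏ a ∈ Finset.range (p b), f (a, b) := by
  classical
  rw [cells, Finset.prod_filter, Finset.prod_product, Finset.prod_comm]
  refine Finset.prod_congr rfl fun b hbm => ?_
  rw [← Finset.prod_filter]
  refine Finset.prod_congr ?_ fun _ _ => rfl
  ext a
  simp only [Finset.mem_filter, Finset.mem_range]
  have := hb b (Finset.mem_range.mp hbm)
  omega

/-- The product of the opposite hook lengths equals the product of the hook lengths
if and only if the partition is a rectangle (all nonzero parts equal). -/
theorem prod_hookOp_eq_prod_hookLen_iff_rectangle (n : ℕ) (p : ℕ → ℕ)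
    (hp : IsPartitionOf n p) :
    (∏ c ∈ cells p n, hookOp c = ∏ c ∈ cells p n, hookLen p n c) ↔
      (∀ i j, p i ≠ 0 → p j ≠ 0 → p i = p j) := by
  obtain ⟨hanti, hpn, hsum⟩ := hp
  have hbound : ∀ b < n, p b ≤ n := by
    intro b hb
    calc p b ≤ ∑ i ∈ Finset.range n, p i :=
          Finset.single_le_sum (fun i _ => Nat.zero_le _) (Finset.mem_range.mpr hb)
      _ = n := hsum
  have hsupp : ∀ i, p i ≠ 0 → i < n := by
    intro i hi
    by_contra h
    push_neg at h
    exact hi (Nat.le_antisymm (hpn ▸ hanti h) (Nat.zero_le _))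
  have hOPe : ∏ c ∈ cells p n, hookOp c = OP p n := by
    rw [prod_cells p n hbound]
    rfl
  have hHKe : ∏ c ∈ cells p n, hookLen p n c = HK p n := by
    rw [prod_cells p n hbound]
    rfl
  obtain ⟨_, hiff⟩ := aux n p hanti
  rw [hOPe, hHKe, eq_comm, hiff]
  constructor
  · intro h i j hi hj
    exact h i (hsupp i hi) j (hsupp j hj) hi hj
  · intro h b _ b' _ h1 h2
    exact h b b' h1 h2
end

section
/- Let λ be a partition of n ≥ 1, let N(λ) = n - max_{c∈λ} h_c^op, and set N = min(N(λ), ⌊(n-1)/2⌋). Then for any 0 ≤ M ≤ N, the product of the opposite hook lengths of λ satisfies ∏_{c∈λ} h_c^op ≤ (n-M)! · (M+1)!. -/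
lemma mem_cells {p : ℕ → ℕ} {n a b : ℕ} :
    (a, b) ∈ cells p n ↔ a < n ∧ b < n ∧ a < p b := by
  simp [cells, Finset.mem_filter, Finset.mem_product, and_assoc]

lemma mem_cells' {p : ℕ → ℕ} {n : ℕ} {c : ℕ × ℕ} :
    c ∈ cells p n ↔ c.1 < n ∧ c.2 < n ∧ c.1 < p c.2 := by
  obtain ⟨a, b⟩ := c
  exact mem_cells

lemma part_le {p : ℕ → ℕ} {n : ℕ} (hp : IsPartitionOf n p) (hn : 1 ≤ n) (b : ℕ) :
    p b ≤ n := by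
  have h0 : p b ≤ p 0 := hp.1 (Nat.zero_le b)
  have h1 : p 0 ≤ ∑ i ∈ Finset.range n, p i :=
    Finset.single_le_sum (fun i _ => Nat.zero_le _) (Finset.mem_range.mpr hn)
  have h2 := hp.2.2
  omega

lemma cells_card {p : ℕ → ℕ} {n : ℕ} (hp : IsPartitionOf n p) (hn : 1 ≤ n) :
    (cells p n).card = n := by
  have hrepr : cells p n =
      (Finset.range n).biUnion (fun b => (Finset.range (p b)).image (fun a => (a, b))) := by
    ext ⟨a, b⟩
    simp only [mem_cells, Finset.mem_biUnion, Finset.mem_range, Finset.mem_image]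
    constructor
    · rintro ⟨ha, hb, hab⟩; exact ⟨b, hb, a, hab, rfl⟩
    · rintro ⟨b', hb', a', ha', h⟩
      injection h with h1 h2
      subst h1; subst h2
      exact ⟨lt_of_lt_of_le ha' (part_le hp hn _), hb', ha'⟩
  rw [hrepr, Finset.card_biUnion]
  · have hcongr : ∀ b ∈ Finset.range n,
        ((Finset.range (p b)).image (fun a => (a, b))).card = p b := by
      intro b _
      rw [Finset.card_image_of_injective _ (fun a₁ a₂ h => by
        simpa using congrArg Prod.fst h)]
      exact Finset.card_range _
    rw [Finset.sum_congr rfl hcongr, hp.2.2]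
  · intro x _ y _ hxy
    rw [Function.onFun, Finset.disjoint_left]
    rintro ⟨a, b⟩ h1 h2
    simp only [Finset.mem_image, Finset.mem_range, Prod.mk.injEq] at h1 h2
    obtain ⟨_, _, _, rfl⟩ := h1
    obtain ⟨_, _, _, h⟩ := h2
    exact hxy h.symm

lemma hookOp_le {p : ℕ → ℕ} {n : ℕ} (hp : IsPartitionOf n p) {c : ℕ × ℕ}
    (hc : c ∈ cells p n) : hookOp c ≤ n := by
  obtain ⟨a, b⟩ := c
  rw [mem_cells] at hc
  obtain ⟨ha, hb, hab⟩ := hc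
  have key : (b + 1) * (a + 1) ≤ n := by
    calc (b + 1) * (a + 1) = ∑ _i ∈ Finset.range (b + 1), (a + 1) := by
          rw [Finset.sum_const, Finset.card_range, smul_eq_mul]
      _ ≤ ∑ i ∈ Finset.range (b + 1), p i := Finset.sum_le_sum (fun i hi => by
          have hib : i ≤ b := by simpa [Nat.lt_succ_iff] using hi
          have := hp.1 hib
          omega)
      _ ≤ ∑ i ∈ Finset.range n, p i := Finset.sum_le_sum_of_subset (by
          intro x hx
          simp only [Finset.mem_range] at hx ⊢
          omega)
      _ = n := hp.2.2
  show a + b + 1 ≤ n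
  nlinarith

lemma rect_subset {p : ℕ → ℕ} {n : ℕ} (hp : IsPartitionOf n p) {c : ℕ × ℕ}
    (hc : c ∈ cells p n) :
    Finset.range (c.1 + 1) ×ˢ Finset.range (c.2 + 1) ⊆ cells p n := by
  rintro ⟨a, b⟩ hab
  simp only [Finset.mem_product, Finset.mem_range] at hab
  rw [mem_cells' ] at hc
  rw [mem_cells]
  refine ⟨by omega, by omega, ?_⟩
  have : p c.2 ≤ p b := hp.1 (by omega)
  omega

lemma two_on_diag_aux {p : ℕ → ℕ} {n : ℕ} (hp : IsPartitionOf n p) (hn : 1 ≤ n)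
    {c d : ℕ × ℕ} (hc : c ∈ cells p n) (hd : d ∈ cells p n) (hlt : d.1 < c.1)
    (hdiag : c.1 + c.2 = d.1 + d.2) : 2 * (c.1 + c.2) + 1 ≤ n := by
  set R1 := Finset.range (c.1 + 1) ×ˢ Finset.range (c.2 + 1) with hR1
  set R2 := Finset.range (d.1 + 1) ×ˢ Finset.range (d.2 + 1) with hR2
  have hsub : R1 ∪ R2 ⊆ cells p n :=
    Finset.union_subset (rect_subset hp hc) (rect_subset hp hd)
  have hcard : (R1 ∪ R2).card ≤ n := by
    rw [← cells_card hp hn]; exact Finset.card_le_card hsub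
  have hinter : R1 ∩ R2 = Finset.range (d.1 + 1) ×ˢ Finset.range (c.2 + 1) := by
    ext ⟨a, b⟩
    simp only [hR1, hR2, Finset.mem_inter, Finset.mem_product, Finset.mem_range]
    omega
  have hu := Finset.card_union_add_card_inter R1 R2
  rw [hinter] at hu
  have hcR1 : R1.card = (c.1 + 1) * (c.2 + 1) := by
    rw [hR1, Finset.card_product, Finset.card_range, Finset.card_range]
  have hcR2 : R2.card = (d.1 + 1) * (d.2 + 1) := by
    rw [hR2, Finset.card_product, Finset.card_range, Finset.card_range]
  have hcI : (Finset.range (d.1 + 1) ×ˢ Finset.range (c.2 + 1)).card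
      = (d.1 + 1) * (c.2 + 1) := by
    rw [Finset.card_product, Finset.card_range, Finset.card_range]
  rw [hcR1, hcR2, hcI] at hu
  obtain ⟨u, hu2⟩ : ∃ u, c.1 = d.1 + 1 + u := ⟨c.1 - d.1 - 1, by omega⟩
  have hd2 : d.2 = c.2 + 1 + u := by omega
  nlinarith [hcard, hu, hu2, hd2]

lemma two_on_diag {p : ℕ → ℕ} {n : ℕ} (hp : IsPartitionOf n p) (hn : 1 ≤ n)
    {c d : ℕ × ℕ} (hc : c ∈ cells p n) (hd : d ∈ cells p n) (hne : c ≠ d)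
    (hdiag : c.1 + c.2 = d.1 + d.2) : 2 * (c.1 + c.2) + 1 ≤ n := by
  rcases lt_trichotomy c.1 d.1 with h | h | h
  · rw [hdiag]
    exact two_on_diag_aux hp hn hd hc h hdiag.symm
  · exact absurd (Prod.ext_iff.mpr ⟨h, by omega⟩) hne
  · exact two_on_diag_aux hp hn hc hd h hdiag

lemma aux_main : ∀ n : ℕ, ∀ p : ℕ → ℕ, 1 ≤ n → IsPartitionOf n p → ∀ M : ℕ,
    M + (cells p n).sup hookOp ≤ n → 2 * M + 1 ≤ n →
    ∏ c ∈ cells p n, hookOp c ≤ (n - M).factorial * (M + 1).factorial := by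
  intro n
  induction n using Nat.strong_induction_on with
  | _ n ih =>
  intro p hn hp M hMK hM2
  rcases Nat.lt_or_ge n 2 with h2 | h2
  · -- n = 1
    have hn1 : n = 1 := by omega
    subst hn1
    have hM0 : M = 0 := by omega
    subst hM0
    have hp0 : p 0 = 1 := by have := hp.2.2; simpa using this
    have hcells : cells p 1 = {((0 : ℕ), (0 : ℕ))} := by
      ext ⟨a, b⟩
      simp only [mem_cells, Finset.mem_singleton, Prod.mk.injEq]
      constructor
      · rintro ⟨ha, hb, hab⟩
        have hb0 : b = 0 := by omega
        rw [hb0, hp0] at hab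
        exact ⟨by omega, hb0⟩
      · rintro ⟨rfl, rfl⟩
        exact ⟨by omega, by omega, by omega⟩
    rw [hcells, Finset.prod_singleton]
    simp [hookOp, Nat.factorial]
  · -- n ≥ 2
    set K := (cells p n).sup hookOp with hKdef
    have hKn : K ≤ n := by
      rw [hKdef]
      exact Finset.sup_le (fun c hc => hookOp_le hp hc)
    have hex : ∃ c0, c0 ∈ cells p n ∧ hookOp c0 = K ∧
        ((c0.2 = n - 1 ∧ c0.1 = 0) ∨ (c0.2 ≠ n - 1 ∧ p (n - 1) = 0)) := by
      by_cases hlast : p (n - 1) = 0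
      · have hp0 : 1 ≤ p 0 := by
          by_contra h
          have hz : ∀ i ∈ Finset.range n, p i = 0 := fun i _ => by
            have := hp.1 (Nat.zero_le i); omega
          have h0 := Finset.sum_eq_zero hz
          rw [hp.2.2] at h0
          omega
        have hne : (cells p n).Nonempty :=
          ⟨(0, 0), mem_cells.mpr ⟨by omega, by omega, hp0⟩⟩
        obtain ⟨c0, hc0, hc0K⟩ := Finset.exists_mem_eq_sup _ hne hookOp
        refine ⟨c0, hc0, by rw [hKdef, hc0K], Or.inr ⟨?_, hlast⟩⟩
        intro hb
        have h3 := (mem_cells'.mp hc0).2.2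
        rw [hb] at h3; omega
      · have h1 : p (n - 1) = 1 := by
          by_contra hge
          have hg2 : 2 ≤ p (n - 1) := by omega
          have hmem : ((1 : ℕ), n - 1) ∈ cells p n :=
            mem_cells.mpr ⟨by omega, by omega, hg2⟩
          have hle : 1 + (n - 1) + 1 ≤ (cells p n).sup hookOp :=
            Finset.le_sup (f := hookOp) hmem
          omega
        have hmem : ((0 : ℕ), n - 1) ∈ cells p n :=
          mem_cells.mpr ⟨by omega, by omega, by omega⟩
        have hle : 0 + (n - 1) + 1 ≤ (cells p n).sup hookOp :=
          Finset.le_sup (f := hookOp) hmem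
        refine ⟨(0, n - 1), hmem, ?_, Or.inl ⟨rfl, rfl⟩⟩
        show 0 + (n - 1) + 1 = K
        omega
    obtain ⟨c0, hc0, hc0K, hc0last⟩ := hex
    obtain ⟨hc0a, hc0b, hc0ab⟩ := mem_cells'.mp hc0
    have hc0Kd : c0.1 + c0.2 + 1 = K := hc0K
    have hpb0 : p c0.2 = c0.1 + 1 := by
      by_contra h
      have hlt2 : c0.1 + 1 < p c0.2 := by omega
      have hple := part_le hp (by omega) c0.2
      have hmem : (c0.1 + 1, c0.2) ∈ cells p n :=
        mem_cells.mpr ⟨by omega, hc0b, hlt2⟩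
      have hle : (c0.1 + 1) + c0.2 + 1 ≤ (cells p n).sup hookOp :=
        Finset.le_sup (f := hookOp) hmem
      omega
    have hpb1 : p (c0.2 + 1) ≤ c0.1 := by
      by_cases hq : c0.2 + 1 < n
      · by_contra h
        have hmem : (c0.1, c0.2 + 1) ∈ cells p n :=
          mem_cells.mpr ⟨hc0a, hq, by omega⟩
        have hle : c0.1 + (c0.2 + 1) + 1 ≤ (cells p n).sup hookOp :=
          Finset.le_sup (f := hookOp) hmem
        omega
      · have heq : c0.2 + 1 = n := by omega
        rw [heq, hp.2.1]
        exact Nat.zero_le _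
    set p' : ℕ → ℕ := fun b => if b = c0.2 then c0.1 else p b with hp'def
    have hp'anti : Antitone p' := by
      intro i j hij
      simp only [hp'def]
      split_ifs with h1 h2 h2
      · exact le_rfl
      · have hic : i ≤ c0.2 := by omega
        have := hp.1 hic
        omega
      · have hcj : c0.2 + 1 ≤ j := by omega
        have := hp.1 hcj
        omega
      · exact hp.1 hij
    have hp'last : p' (n - 1) = 0 := by
      simp only [hp'def]
      split_ifs with h
      · rcases hc0last with ⟨_, ha⟩ | ⟨hb, _⟩
        · exact ha
        · exact absurd h.symm hb
      · rcases hc0last with ⟨hb, _⟩ | ⟨_, h0⟩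
        · exact absurd hb.symm h
        · exact h0
    have hb0mem : c0.2 ∈ Finset.range n := Finset.mem_range.mpr hc0b
    have e1 := Finset.add_sum_erase (Finset.range n) p hb0mem
    have e2 := Finset.add_sum_erase (Finset.range n) p' hb0mem
    have e3 : ∑ x ∈ (Finset.range n).erase c0.2, p' x
        = ∑ x ∈ (Finset.range n).erase c0.2, p x :=
      Finset.sum_congr rfl (fun x hx => by
        simp only [hp'def]
        rw [if_neg (Finset.ne_of_mem_erase hx)])
    have hp'b0 : p' c0.2 = c0.1 := by simp [hp'def]
    have hsumn := hp.2.2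
    have hsum' : ∑ i ∈ Finset.range n, p' i = n - 1 := by omega
    have hp'sum : ∑ i ∈ Finset.range (n - 1), p' i = n - 1 := by
      have hr : n - 1 + 1 = n := by omega
      have hs := Finset.sum_range_succ p' (n - 1)
      rw [hr] at hs
      omega
    have hp'part : IsPartitionOf (n - 1) p' := ⟨hp'anti, hp'last, hp'sum⟩
    have hcells' : cells p' (n - 1) = (cells p n).erase c0 := by
      ext ⟨a, b⟩
      simp only [mem_cells, Finset.mem_erase]
      constructor
      · rintro ⟨ha, hb, hab⟩
        simp only [hp'def] at hab
        split_ifs at hab with h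
        · refine ⟨?_, by omega, by omega, ?_⟩
          · intro heq
            have h5 : a = c0.1 := congrArg Prod.fst heq
            omega
          · rw [h, hpb0]; omega
        · refine ⟨?_, by omega, by omega, hab⟩
          intro heq
          exact h (congrArg Prod.snd heq)
      · rintro ⟨hne, ha, hb, hab⟩
        have hKle : a + b + 1 ≤ (cells p n).sup hookOp :=
          Finset.le_sup (f := hookOp) (mem_cells.mpr ⟨ha, hb, hab⟩)
        have hb' : b < n - 1 := by
          by_contra h
          have hbn : b = n - 1 := by omega
          rcases hc0last with ⟨hb0, ha0⟩ | ⟨_, h0⟩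
          · have hp1 : p (n - 1) = 1 := by
              rw [← hb0, hpb0, ha0]
            rw [hbn, hp1] at hab
            apply hne
            rw [Prod.ext_iff]
            constructor
            · show a = c0.1; omega
            · show b = c0.2; omega
          · rw [hbn, h0] at hab
            omega
        have ha' : a < n - 1 := by
          by_contra h
          have han : a = n - 1 := by omega
          have h2d : 2 * (a + b) + 1 ≤ n :=
            two_on_diag hp (by omega) (mem_cells.mpr ⟨ha, hb, hab⟩) hc0 hne
              (show a + b = c0.1 + c0.2 by omega)
          omega
        refine ⟨ha', hb', ?_⟩
        simp only [hp'def]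
        split_ifs with h
        · have hane : a ≠ c0.1 := by
            intro hh
            exact hne (Prod.ext_iff.mpr ⟨hh, h⟩)
          have hpb : p b = c0.1 + 1 := by rw [h, hpb0]
          omega
        · exact hab
    have hprod : ∏ c ∈ cells p n, hookOp c
        = K * ∏ c ∈ cells p' (n - 1), hookOp c := by
      rw [hcells', ← Finset.mul_prod_erase _ hookOp hc0, hc0K]
    set K' := (cells p' (n - 1)).sup hookOp with hK'def
    have hK'K : K' ≤ K := by
      rw [hK'def, hKdef]
      exact Finset.sup_le fun c hc =>
        Finset.le_sup (f := hookOp) (Finset.mem_of_mem_erase (hcells' ▸ hc))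
    have hn1 : 1 ≤ n - 1 := by omega
    by_cases hB : 2 * M + 1 = n
    · have hM1 : 1 ≤ M := by omega
      have ihr := ih (n - 1) (by omega) p' hn1 hp'part (M - 1) (by omega) (by omega)
      have hr1 : n - 1 - (M - 1) = n - M := by omega
      have hr2 : M - 1 + 1 = M := by omega
      rw [hr1, hr2] at ihr
      rw [hprod]
      have hKM : K ≤ M + 1 := by omega
      calc K * ∏ c ∈ cells p' (n - 1), hookOp c
          ≤ (M + 1) * ((n - M).factorial * M.factorial) :=
            Nat.mul_le_mul hKM ihr
        _ = (n - M).factorial * (M + 1).factorial := by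
            rw [Nat.factorial_succ]; ring
    · by_cases hC : n ≤ M + K'
      · exfalso
        have hne' : (cells p' (n - 1)).Nonempty := by
          rw [← Finset.card_pos, cells_card hp'part hn1]
          omega
        obtain ⟨c1, hc1, hc1K⟩ := Finset.exists_mem_eq_sup _ hne' hookOp
        have hc1mem : c1 ∈ (cells p n).erase c0 := hcells' ▸ hc1
        have hc1ne : c1 ≠ c0 := Finset.ne_of_mem_erase hc1mem
        have hc1cell := Finset.mem_of_mem_erase hc1mem
        have hc1Kd : (cells p' (n - 1)).sup hookOp = c1.1 + c1.2 + 1 := hc1K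
        have hdiag : c1.1 + c1.2 = c0.1 + c0.2 := by omega
        have h2d := two_on_diag hp (by omega) hc1cell hc0 hc1ne hdiag
        omega
      · have ihr := ih (n - 1) (by omega) p' hn1 hp'part M (by omega) (by omega)
        rw [hprod]
        have hKnM : K ≤ n - M := by omega
        have hfac : (n - M).factorial = (n - M) * (n - 1 - M).factorial := by
          have hr : n - M = (n - 1 - M) + 1 := by omega
          rw [hr, Nat.factorial_succ]
        calc K * ∏ c ∈ cells p' (n - 1), hookOp c
            ≤ (n - M) * ((n - 1 - M).factorial * (M + 1).factorial) :=
              Nat.mul_le_mul hKnM ihr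
          _ = (n - M).factorial * (M + 1).factorial := by
              rw [hfac]; ring

/-- With `N = min(N(λ), ⌊(n-1)/2⌋)` where `N(λ) = n - max_{c∈λ} h_c^op`, for any
`0 ≤ M ≤ N` the product of the opposite hook lengths is at most `(n-M)! (M+1)!`. -/
theorem prod_hookOp_le_factorials (n : ℕ) (p : ℕ → ℕ) (hn : 1 ≤ n)
    (hp : IsPartitionOf n p) (M : ℕ)
    (hM : M ≤ min (n - (cells p n).sup hookOp) ((n - 1) / 2)) :
    ∏ c ∈ cells p n, hookOp c ≤ (n - M).factorial * (M + 1).factorial := by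
  have hKn : (cells p n).sup hookOp ≤ n := Finset.sup_le fun c hc => hookOp_le hp hc
  have h1 : M ≤ n - (cells p n).sup hookOp := (le_min_iff.mp hM).1
  have h2 : M ≤ (n - 1) / 2 := (le_min_iff.mp hM).2
  exact aux_main n p hn hp M (by omega) (by omega)
end
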